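/- arXiv:2112.02318 — 6 statements merged into one kernel-verified Lean document; each statement's English description precedes it below -/
import Mathlib

section
/- Let n be a positive integer and let (g_m)_{m∈ℕ} be a sequence of convex functions g_m : ℝⁿ → ℝ which is pointwise increasing in m and converges pointwise to a convex function g : ℝⁿ → ℝ. For a function f : ℝⁿ → ℝ define its convex conjugate f* : ℝⁿ → EReal by f*(x) = ⨆_{y∈ℝⁿ} (⟨x,y⟩ − f(y)), where the supremum is taken in the extended reals. Then: (a) the sequence (g_m*) is pointwise decreasing in m; and (b) for every x in the intrinsic (relative) interior of the set {x ∈ ℝⁿ : g*(x) < ⊤}, one has ⨅_{m} g_m*(x) = g*(x). -/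
/-!
Shift everything by `x`: with `hₘ y = gₘ y - ⟪x, y⟫` and `h y = g y - ⟪x, y⟫` we have
`gₘ*(x) = -inf hₘ` and `g*(x) = -inf h`, so the claim is that `inf hₘ → inf h`.
Let `L` be the direction of the affine span of `S = dom g*`. Since `gₘ ≤ g`, every subgradient of
`gₘ` lies in `dom gₘ* ⊆ S ⊆ x + L`, so `hₘ` is invariant under translations orthogonal to `L`
and it suffices to look at `L`. As `x` is in the relative interior of `S`, `g*` is finite at the
points `x ± δ bᵢ` for an orthonormal basis `(bᵢ)` of `L`, which makes `h` coercive on `L`.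
By Dini's theorem `hₘ → h` uniformly on a ball of `L` outside of which `h ≥ h 0 + 1`, and
convexity of `hₘ` along rays from `0` carries the lower bound `inf h - ε` from the ball to all
of `L`.
-/

open Filter

/-- The convex conjugate of `f : ℝⁿ → ℝ`, with values in the extended reals:
`f*(x) = ⨆ y, (⟨x,y⟩ − f(y))`. -/
noncomputable def convexConjugate {n : ℕ} (f : (Fin n → ℝ) → ℝ) (x : Fin n → ℝ) : EReal :=
  ⨆ y : Fin n → ℝ, (((∑ i, x i * y i) - f y : ℝ) : EReal)

open Set Topology
open scoped InnerProductSpace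

theorem exists_forall_add_mem_of_mem_intrinsicInterior {E : Type*} [NormedAddCommGroup E]
    [NormedSpace ℝ E] {s : Set E} {x : E} (hx : x ∈ intrinsicInterior ℝ s) :
    ∃ δ > 0, ∀ u ∈ (affineSpan ℝ s).direction, ‖u‖ ≤ δ → x + u ∈ s := by
  obtain ⟨x', hx', rfl⟩ := hx
  obtain ⟨ε, hε, hball⟩ := Metric.mem_nhds_iff.1 (mem_interior_iff_mem_nhds.1 hx')
  refine ⟨ε / 2, half_pos hε, fun u hu hu' => ?_⟩
  have hmem : (x' : E) + u ∈ affineSpan ℝ s := by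
    simpa [add_comm] using AffineSubspace.vadd_mem_of_mem_direction hu x'.2
  exact hball (a := ⟨_, hmem⟩) (by simp [Subtype.dist_eq, dist_eq_norm]; linarith)

theorem exists_forall_sub_le_of_monotone_convexOn {V : Type*} [NormedAddCommGroup V]
    [NormedSpace ℝ V] [FiniteDimensional ℝ V] {f : ℕ → V → ℝ} {F : V → ℝ}
    (hf : ∀ m, ConvexOn ℝ univ (f m)) (hF : ConvexOn ℝ univ F) (hmono : Monotone f)
    (hlim : ∀ v, Tendsto (f · v) atTop (𝓝 (F v)))
    (hcoer : Tendsto F (Bornology.cobounded V) atTop) {c : ℝ} (hc : ∀ v, c ≤ F v) {ε : ℝ}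
    (hε : 0 < ε) : ∃ M, ∀ v, c - ε ≤ f M v := by
  obtain ⟨R, -, hR⟩ :=
    hasBasis_cobounded_norm.eventually_iff.1 (hcoer.eventually_ge_atTop (F 0 + 1))
  set R' := max R 1
  set ε' := min ε (1 / 2)
  have hε' : 0 < ε' := lt_min hε one_half_pos
  have hunif : TendstoUniformlyOn f F atTop (Metric.closedBall 0 R') :=
    Monotone.tendstoUniformlyOn_of_forall_tendsto (isCompact_closedBall 0 R')
      (fun m => ((hf m).continuousOn isOpen_univ).mono (subset_univ _))
      (fun v _ _ _ h => hmono h v) ((hF.continuousOn isOpen_univ).mono (subset_univ _))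
      (fun v _ => hlim v)
  obtain ⟨M, hM⟩ := (Metric.tendstoUniformlyOn_iff.1 hunif ε' hε').exists
  have hball : ∀ v, ‖v‖ ≤ R' → F v - ε' < f M v := fun v hv => by
    have := hM v (by simpa using hv)
    rw [Real.dist_eq, abs_sub_lt_iff] at this
    linarith
  refine ⟨M, fun v => ?_⟩
  rcases le_or_gt ‖v‖ R' with hv | hv
  · linarith [hball v hv, hc v, min_le_left ε (1 / 2)]
  -- Far out, `f M` is larger on the sphere of radius `R'` than at `0`, so by convexity it can
  -- only grow further along the ray through `v`.
  have hR'pos : 0 < R' := lt_of_lt_of_le one_pos (le_max_right R 1)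
  have hvpos : 0 < ‖v‖ := hR'pos.trans hv
  set θ := R' / ‖v‖
  have hθ : 0 < θ := div_pos hR'pos hvpos
  have hθ1 : θ < 1 := (div_lt_one hvpos).2 hv
  have hv' : ‖θ • v‖ = R' := by
    rw [norm_smul, Real.norm_eq_abs, abs_of_pos hθ, div_mul_cancel₀ _ hvpos.ne']
  have hsphere : F (θ • v) - ε' < f M (θ • v) := hball _ hv'.le
  have hgrow : F 0 + 1 ≤ F (θ • v) := hR (show R ≤ ‖θ • v‖ from hv' ▸ le_max_left R 1)
  have hzero : f M 0 ≤ F 0 := Monotone.ge_of_tendsto (fun _ _ h => hmono h 0) (hlim 0) M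
  have hseg : θ • v ∈ openSegment ℝ 0 v :=
    ⟨1 - θ, θ, sub_pos.2 hθ1, hθ, sub_add_cancel 1 θ, by rw [smul_zero, zero_add]⟩
  have hray : f M (θ • v) ≤ f M v := (hf M).le_right_of_left_le (mem_univ 0) (mem_univ v) hseg
    (by linarith [min_le_right ε (1 / 2)])
  linarith [hc (θ • v), min_le_left ε (1 / 2)]

section InnerProductSpace

variable {E : Type*} [NormedAddCommGroup E] [InnerProductSpace ℝ E]

theorem ConvexOn.exists_subgradient [CompleteSpace E] {f : E → ℝ} (hf : ConvexOn ℝ univ f)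
    (hfc : Continuous f) (y₀ : E) :
    ∃ p : E, ∀ y, f y₀ + ⟪p, y - y₀⟫_ℝ ≤ f y := by
  have hopen : IsOpen {q : E × ℝ | f q.1 < q.2} :=
    isOpen_lt (hfc.comp continuous_fst) continuous_snd
  have hconv : Convex ℝ {q : E × ℝ | f q.1 < q.2} := by
    simpa using hf.convex_strict_epigraph
  obtain ⟨F, hF⟩ :=
    geometric_hahn_banach_point_open hconv hopen (x := (y₀, f y₀)) (lt_irrefl (f y₀) :)
  have hsplit : ∀ y t, F (y, t) = F (y, 0) + t * F (0, 1) := fun y t => by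
    rw [← smul_eq_mul, ← map_smul, ← map_add, Prod.smul_mk, smul_zero, smul_eq_mul, mul_one,
      Prod.mk_add_mk, add_zero, zero_add]
  have hc : 0 < F (0, 1) := by
    have := hF (y₀, f y₀ + 1) (by simp)
    rw [hsplit y₀ (f y₀), hsplit y₀ (f y₀ + 1)] at this
    linarith
  -- `F` supports the epigraph at `(y₀, f y₀)`; its `E`-part rescaled by `-1 / F (0, 1)` is `p`.
  refine ⟨(-(F (0, 1))⁻¹) • (InnerProductSpace.toDual ℝ E).symm (F.comp (.inl ℝ E ℝ)), fun y => ?_⟩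
  have hsupp : F (y₀, 0) + f y₀ * F (0, 1) ≤ F (y, 0) + f y * F (0, 1) := by
    refine le_of_forall_pos_lt_add fun ε hε => ?_
    have := hF (y, f y + ε / F (0, 1)) (by simp [hc, hε])
    rw [hsplit, hsplit y] at this
    field_simp at this
    linarith
  rw [real_inner_smul_left, InnerProductSpace.toDual_symm_apply]
  simp only [ContinuousLinearMap.comp_apply, ContinuousLinearMap.inl_apply, map_sub]
  have key : -(F (0, 1))⁻¹ * (F (y, 0) - F (y₀, 0)) ≤ f y - f y₀ := by
    rw [neg_mul, neg_le, le_inv_mul_iff₀ hc]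
    linarith
  linarith

theorem OrthonormalBasis.norm_le_sum_abs_inner {ι : Type*} [Fintype ι]
    (b : OrthonormalBasis ι ℝ E) (z : E) :
    ‖z‖ ≤ ∑ i, |⟪b i, z⟫_ℝ| := by
  conv_lhs => rw [← b.sum_repr' z]
  refine (norm_sum_le _ _).trans_eq (Finset.sum_congr rfl fun i _ => ?_)
  rw [norm_smul, b.orthonormal.1 i, mul_one, Real.norm_eq_abs]

noncomputable def fenchelConjugate (f : E → ℝ) (x : E) : EReal :=
  ⨆ y, ((⟪x, y⟫_ℝ - f y : ℝ) : EReal)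

theorem fenchelConjugate_le_coe_iff {f : E → ℝ} {x : E} {c : ℝ} :
    fenchelConjugate f x ≤ c ↔ ∀ y, ⟪x, y⟫_ℝ - f y ≤ c := by
  simp only [fenchelConjugate, iSup_le_iff, EReal.coe_le_coe_iff]

theorem fenchelConjugate_lt_top_iff {f : E → ℝ} {x : E} :
    fenchelConjugate f x < ⊤ ↔ ∃ c : ℝ, ∀ y, ⟪x, y⟫_ℝ - f y ≤ c := by
  refine ⟨fun h => ?_, fun ⟨c, hc⟩ =>
    (fenchelConjugate_le_coe_iff.2 hc).trans_lt (EReal.coe_lt_top c)⟩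
  obtain ⟨c, hc, -⟩ := EReal.exists_between_coe_real h
  exact ⟨c, fenchelConjugate_le_coe_iff.1 hc.le⟩

theorem fenchelConjugate_anti {f g : E → ℝ} (h : ∀ y, f y ≤ g y) (x : E) :
    fenchelConjugate g x ≤ fenchelConjugate f x :=
  iSup_mono fun y => EReal.coe_le_coe_iff.2 (by linarith [h y])

theorem ConvexOn.sub_inner_add_eq_of_mem_orthogonal [CompleteSpace E] {f : E → ℝ}
    (hf : ConvexOn ℝ univ f) (hfc : Continuous f) {x : E} {L : Submodule ℝ E}
    (hdom : ∀ p, fenchelConjugate f p < ⊤ → p - x ∈ L) (y : E) {d : E} (hd : d ∈ Lᗮ) :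
    f (y + d) - ⟪x, y + d⟫_ℝ = f y - ⟪x, y⟫_ℝ := by
  suffices key : ∀ y, ∀ d ∈ Lᗮ, f (y + d) - ⟪x, y + d⟫_ℝ ≤ f y - ⟪x, y⟫_ℝ from
    le_antisymm (key y d hd) (by simpa using key (y + d) (-d) (neg_mem hd))
  intro y d hd
  obtain ⟨p, hp⟩ := hf.exists_subgradient hfc (y + d)
  have hpx : ⟪p - x, d⟫_ℝ = 0 := by
    refine Submodule.inner_right_of_mem_orthogonal (hdom p ?_) hd
    refine fenchelConjugate_lt_top_iff.2 ⟨⟪p, y + d⟫_ℝ - f (y + d), fun z => ?_⟩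
    have := hp z
    rw [inner_sub_right] at this
    linarith
  have := hp y
  rw [show y - (y + d) = -d by abel, inner_neg_right] at this
  rw [inner_sub_left] at hpx
  rw [inner_add_right]
  linarith

theorem tendsto_cobounded_atTop_of_fenchelConjugate_lt_top [FiniteDimensional ℝ E] {H : E → ℝ}
    {δ : ℝ} (hδ : 0 < δ) (hH : ∀ u, ‖u‖ ≤ δ → fenchelConjugate H u < ⊤) :
    Tendsto H (Bornology.cobounded E) atTop := by
  set b := stdOrthonormalBasis ℝ E
  set k := Module.finrank ℝ E
  have hbound : ∀ u, ‖u‖ ≤ δ → ∃ c, ∀ z, ⟪u, z⟫_ℝ ≤ H z + c := fun u hu => by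
    obtain ⟨c, hc⟩ := fenchelConjugate_lt_top_iff.1 (hH u hu)
    exact ⟨c, fun z => by linarith [hc z]⟩
  -- The bound at `u = 0` keeps the factor `k + 1` below positive, also when `E` is trivial.
  obtain ⟨c₀, hc₀⟩ := hbound 0 (by simp [hδ.le])
  have hcoord : ∀ i, ∃ c, ∀ z, δ * |⟪b i, z⟫_ℝ| ≤ H z + c := fun i => by
    have hnorm : ∀ σ : ℝ, |σ| = δ → ‖σ • b i‖ ≤ δ := fun σ hσ => by
      rw [norm_smul, b.orthonormal.1 i, Real.norm_eq_abs, hσ, mul_one]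
    obtain ⟨c₁, hc₁⟩ := hbound (δ • b i) (hnorm δ (abs_of_pos hδ))
    obtain ⟨c₂, hc₂⟩ := hbound ((-δ) • b i) (hnorm (-δ) (by rw [abs_neg, abs_of_pos hδ]))
    refine ⟨max c₁ c₂, fun z => ?_⟩
    have h₁ := hc₁ z
    have h₂ := hc₂ z
    rw [real_inner_smul_left] at h₁ h₂
    rcases abs_cases ⟪b i, z⟫_ℝ with ⟨h, -⟩ | ⟨h, -⟩ <;> rw [h] <;>
      linarith [le_max_left c₁ c₂, le_max_right c₁ c₂]
  choose c hc using hcoord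
  have hlin : ∀ z, δ * ‖z‖ - (∑ i, c i + c₀) ≤ (k + 1) * H z := fun z => by
    have hsum : δ * ‖z‖ ≤ ∑ i, (H z + c i) :=
      calc δ * ‖z‖ ≤ δ * ∑ i, |⟪b i, z⟫_ℝ| := by gcongr; exact b.norm_le_sum_abs_inner z
        _ = ∑ i, δ * |⟪b i, z⟫_ℝ| := Finset.mul_sum _ _ _
        _ ≤ ∑ i, (H z + c i) := Finset.sum_le_sum fun i _ => hc i z
    rw [Finset.sum_add_distrib, Finset.sum_const, Finset.card_univ, Fintype.card_fin,
      nsmul_eq_mul] at hsum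
    have := hc₀ z
    simp only [inner_zero_left] at this
    linarith
  have hk : (0 : ℝ) < k + 1 := by positivity
  refine tendsto_atTop_mono (fun z => (div_le_iff₀' hk).2 (hlin z)) ?_
  exact (tendsto_atTop_add_const_right _ _
    (tendsto_norm_cobounded_atTop.const_mul_atTop hδ)).atTop_div_const hk

theorem ConvexOn.comp_subtype_sub_inner {φ : E → ℝ} (hφ : ConvexOn ℝ univ φ) (L : Submodule ℝ E)
    (x : E) : ConvexOn ℝ univ (fun z : L => φ z - ⟪x, (z : E)⟫_ℝ) :=
  (hφ.comp_linearMap L.subtype).sub (((innerₛₗ ℝ x).comp L.subtype).concaveOn convex_univ)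

theorem exists_forall_inner_sub_le_add_of_monotone [FiniteDimensional ℝ E] {g : ℕ → E → ℝ}
    {G : E → ℝ} (hg : ∀ m, ConvexOn ℝ univ (g m)) (hG : ConvexOn ℝ univ G) (hmono : Monotone g)
    (hlim : ∀ y, Tendsto (g · y) atTop (𝓝 (G y))) {x : E}
    (hx : x ∈ intrinsicInterior ℝ {x | fenchelConjugate G x < ⊤}) {r : ℝ}
    (hr : ∀ y, ⟪x, y⟫_ℝ - G y ≤ r) {ε : ℝ} (hε : 0 < ε) :
    ∃ M, ∀ y, ⟪x, y⟫_ℝ - g M y ≤ r + ε := by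
  set S := {x | fenchelConjugate G x < ⊤}
  set L := (affineSpan ℝ S).direction
  have hgG : ∀ m y, g m y ≤ G y := fun m y =>
    Monotone.ge_of_tendsto (fun _ _ h => hmono h y) (hlim y) m
  have hdom : ∀ m p, fenchelConjugate (g m) p < ⊤ → p - x ∈ L := fun m p hp =>
    AffineSubspace.vsub_mem_direction (subset_affineSpan ℝ S
      ((fenchelConjugate_anti (hgG m) p).trans_lt hp))
      (subset_affineSpan ℝ S (intrinsicInterior_subset hx))
  obtain ⟨δ, hδ, hball⟩ := exists_forall_add_mem_of_mem_intrinsicInterior hx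
  have hcoer : Tendsto (fun z : L => G z - ⟪x, (z : E)⟫_ℝ) (Bornology.cobounded L) atTop := by
    refine tendsto_cobounded_atTop_of_fenchelConjugate_lt_top hδ fun u hu => ?_
    obtain ⟨c, hc⟩ := fenchelConjugate_lt_top_iff.1 (hball u u.2 hu)
    refine fenchelConjugate_lt_top_iff.2 ⟨c, fun z => ?_⟩
    have := hc z
    rw [inner_add_left] at this
    rw [Submodule.coe_inner]
    linarith
  obtain ⟨M, hM⟩ := exists_forall_sub_le_of_monotone_convexOn
    (fun m => (hg m).comp_subtype_sub_inner L x) (hG.comp_subtype_sub_inner L x)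
    (fun _ _ h z => by simp only; linarith [hmono h (z : E)])
    (fun z => (hlim z).sub_const _) hcoer (c := -r) (fun z => by linarith [hr z]) hε
  refine ⟨M, fun y => ?_⟩
  have hflat := (hg M).sub_inner_add_eq_of_mem_orthogonal
    (continuousOn_univ.1 ((hg M).continuousOn isOpen_univ)) (hdom M)
    (L.orthogonalProjectionOnto y) (L.sub_starProjection_mem_orthogonal y)
  rw [Submodule.starProjection_apply, add_sub_cancel] at hflat
  linarith [hM (L.orthogonalProjectionOnto y)]

theorem iInf_fenchelConjugate_eq_of_monotone [FiniteDimensional ℝ E] {g : ℕ → E → ℝ}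
    {G : E → ℝ} (hg : ∀ m, ConvexOn ℝ univ (g m)) (hG : ConvexOn ℝ univ G) (hmono : Monotone g)
    (hlim : ∀ y, Tendsto (g · y) atTop (𝓝 (G y))) {x : E}
    (hx : x ∈ intrinsicInterior ℝ {x | fenchelConjugate G x < ⊤}) :
    ⨅ m, fenchelConjugate (g m) x = fenchelConjugate G x := by
  refine le_antisymm (EReal.le_of_forall_lt_iff_le.1 fun z hz => ?_) (le_iInf fun m =>
    fenchelConjugate_anti (fun y => Monotone.ge_of_tendsto (fun _ _ h => hmono h y) (hlim y) m) x)
  obtain ⟨r, hxr, hrz⟩ := EReal.exists_between_coe_real hz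
  obtain ⟨M, hM⟩ := exists_forall_inner_sub_le_add_of_monotone hg hG hmono hlim hx
    (fenchelConjugate_le_coe_iff.1 hxr.le) (sub_pos.2 (EReal.coe_lt_coe_iff.1 hrz))
  exact (iInf_le _ M).trans (fenchelConjugate_le_coe_iff.2 fun y => by linarith [hM y])

end InnerProductSpace

theorem convexConjugate_eq_fenchelConjugate {n : ℕ} (f : (Fin n → ℝ) → ℝ) (x : Fin n → ℝ) :
    convexConjugate f x = fenchelConjugate (f ∘ WithLp.ofLp) (WithLp.toLp 2 x) := by
  rw [convexConjugate, fenchelConjugate, ← (WithLp.equiv 2 (Fin n → ℝ)).iSup_comp]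
  simp [PiLp.inner_apply, mul_comm]

theorem conjugates_of_increasing_convex_sequence_general (n : ℕ)
    (g : ℕ → (Fin n → ℝ) → ℝ) (glim : (Fin n → ℝ) → ℝ)
    (hconv : ∀ m, ConvexOn ℝ Set.univ (g m))
    (hmono : ∀ m x, g m x ≤ g (m + 1) x)
    (hlim : ∀ x, Tendsto (fun m => g m x) atTop (nhds (glim x)))
    (hlimconv : ConvexOn ℝ Set.univ glim) :
    (∀ m x, convexConjugate (g (m + 1)) x ≤ convexConjugate (g m) x) ∧
    (∀ x ∈ intrinsicInterior ℝ {x : Fin n → ℝ | convexConjugate glim x < ⊤},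
      ⨅ m, convexConjugate (g m) x = convexConjugate glim x) := by
  simp only [convexConjugate_eq_fenchelConjugate]
  refine ⟨fun m x => fenchelConjugate_anti (fun y : EuclideanSpace ℝ (Fin n) => hmono m y) _,
    fun x hx => ?_⟩
  set ℓ := WithLp.linearEquiv 2 ℝ (Fin n → ℝ)
  have himage : ℓ.symm.toAffineEquiv '' {x | fenchelConjugate (glim ∘ ℓ) (ℓ.symm x) < ⊤} =
      {y | fenchelConjugate (glim ∘ ℓ) y < ⊤} := by
    ext y
    simpa [ℓ] using ⟨fun ⟨x, hx, hxy⟩ => hxy ▸ hx, fun hy => ⟨y.ofLp, hy, rfl⟩⟩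
  have hx' : ℓ.symm x ∈ intrinsicInterior ℝ {y | fenchelConjugate (glim ∘ ℓ) y < ⊤} := by
    rw [← himage, AffineEquiv.intrinsicInterior_image]
    exact ⟨x, hx, rfl⟩
  exact iInf_fenchelConjugate_eq_of_monotone (fun m => (hconv m).comp_linearMap ℓ.toLinearMap)
    (hlimconv.comp_linearMap ℓ.toLinearMap) (monotone_nat_of_le_succ fun m y => hmono m y)
    (fun y => hlim y) hx'

/-- For an increasing sequence of convex functions `g_m : ℝⁿ → ℝ` converging
pointwise to a convex function `g`, the conjugates `g_m*` are pointwise decreasing, and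
`⨅ m, g_m*(x) = g*(x)` on the intrinsic interior of the domain `{x : g*(x) < ⊤}`. -/
theorem conjugates_of_increasing_convex_sequence (n : ℕ) (hn : 0 < n)
    (g : ℕ → (Fin n → ℝ) → ℝ) (glim : (Fin n → ℝ) → ℝ)
    (hconv : ∀ m, ConvexOn ℝ Set.univ (g m))
    (hmono : ∀ m x, g m x ≤ g (m + 1) x)
    (hlim : ∀ x, Tendsto (fun m => g m x) atTop (nhds (glim x)))
    (hlimconv : ConvexOn ℝ Set.univ glim) :
    (∀ m x, convexConjugate (g (m + 1)) x ≤ convexConjugate (g m) x) ∧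
    (∀ x ∈ intrinsicInterior ℝ {x : Fin n → ℝ | convexConjugate glim x < ⊤},
      ⨅ m, convexConjugate (g m) x = convexConjugate glim x) :=
  conjugates_of_increasing_convex_sequence_general n g glim hconv hmono hlim hlimconv
end

section
/- Let n be a positive integer and let Q ⊆ {x ∈ ℝⁿ : ∀i, xᵢ ≤ 0} be a nonempty rational H-polyhedron such that Q + ℝⁿ_{≤0} ⊆ Q, and let g : ℝⁿ → ℝ be a function that is convex on Q and increasing in each variable on Q (if x, y ∈ Q with xᵢ ≤ yᵢ for all i, then g(x) ≤ g(y)). Then the following are equivalent: (1) the epigraph epi(g) = {(x,t) ∈ ℝⁿ × ℝ : x ∈ Q and t ≥ g(x)} is a rational H-polyhedron in ℝⁿ × ℝ; (2) there exist finitely many vectors s₁, …, s_N ∈ ℚⁿ with all components nonnegative and rational numbers a₁, …, a_N such that g(x) = max_{1≤i≤N} (⟨sᵢ,x⟩ + aᵢ) for all x ∈ Q. -/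
open Pointwise
/-- A rational H-polyhedron in `ℝⁿ`: a finite intersection of closed half-spaces
`{x : ⟨a,x⟩ ≤ b}` with rational normal vectors `a` and rational constants `b`. -/
def IsRatHPolyhedron (n : ℕ) (Q : Set (Fin n → ℝ)) : Prop :=
  ∃ (N : ℕ) (a : Fin N → Fin n → ℚ) (b : Fin N → ℚ),
    Q = ⋂ k : Fin N, {x : Fin n → ℝ | ∑ i, (a k i : ℝ) * x i ≤ (b k : ℝ)}

/-- A rational H-polyhedron in `ℝⁿ × ℝ`: a finite intersection of closed half-spaces
`{(x,t) : ⟨a,x⟩ + s·t ≤ b}` with `a ∈ ℚⁿ` and `s, b ∈ ℚ`. -/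
def IsRatHPolyhedronProd (n : ℕ) (S : Set ((Fin n → ℝ) × ℝ)) : Prop :=
  ∃ (N : ℕ) (a : Fin N → Fin n → ℚ) (s : Fin N → ℚ) (b : Fin N → ℚ),
    S = ⋂ k : Fin N, {p : (Fin n → ℝ) × ℝ |
      (∑ i, (a k i : ℝ) * p.1 i) + (s k : ℝ) * p.2 ≤ (b k : ℝ)}

/-!
Write the epigraph as `⋂ₖ {(x, t) | ⟨aₖ, x⟩ + sₖ t ≤ bₖ}`. It contains every upward vertical ray
`{x} × [g x, ∞)` with `x ∈ Q`, so all `sₖ ≤ 0`. For fixed `x ∈ Q` the constraints with `sₖ = 0`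
do not involve `t`, and those with `sₖ < 0` say `t ≥ ℓₖ x` for a rational affine `ℓₖ`; since the
fibre of the epigraph over `x` is `[g x, ∞)`, this forces `g x = maxₖ ℓₖ x` (and some `sₖ < 0`).
Each `ℓₖ` lies below `g`, and moving down the `i`-th axis stays in `Q` and does not increase `g`,
so a negative `i`-th slope of `ℓₖ` is impossible. Conversely,
`epi g = (Q × ℝ) ∩ ⋂ₖ {(x, t) | ℓₖ x ≤ t}` is an intersection of rational half-spaces.
-/

open Filter

theorem nonpos_of_forall_ge_mul_le {s c C : ℝ} (h : ∀ t ≥ c, s * t ≤ C) : s ≤ 0 := by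
  by_contra! hs
  obtain ⟨t, hCt, hct⟩ :=
    ((tendsto_id.const_mul_atTop hs).eventually_gt_atTop C |>.and (eventually_ge_atTop c)).exists
  exact (h t hct).not_gt hCt

section SolutionRay

variable {ι : Type*} {y : ℝ} {A s b : ι → ℝ}

theorem nonpos_of_forall_le_iff (h : ∀ t, y ≤ t ↔ ∀ k, A k + s k * t ≤ b k) (k : ι) :
    s k ≤ 0 :=
  nonpos_of_forall_ge_mul_le (c := y) (C := b k - A k) fun t ht => by
    linarith [(h t).1 ht k]

theorem le_iff_forall_div_le (h : ∀ t, y ≤ t ↔ ∀ k, A k + s k * t ≤ b k) (t : ℝ) :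
    y ≤ t ↔ ∀ k : {k // s k < 0}, (A k - b k) / -s k ≤ t := by
  rw [h]
  constructor
  · rintro ht ⟨k, hk⟩
    rw [div_le_iff₀ (neg_pos.2 hk)]
    linarith [ht k]
  · intro ht k
    rcases (nonpos_of_forall_le_iff h k).lt_or_eq with hk | hk
    · have hkt := ht ⟨k, hk⟩
      rw [div_le_iff₀ (neg_pos.2 hk)] at hkt
      linarith
    · have hky := (h y).1 le_rfl k
      rw [hk] at hky ⊢
      linarith

theorem nonempty_neg_of_forall_le_iff (h : ∀ t, y ≤ t ↔ ∀ k, A k + s k * t ≤ b k) :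
    Nonempty {k // s k < 0} := by
  by_contra hempty
  rw [not_nonempty_iff] at hempty
  linarith [(le_iff_forall_div_le h (y - 1)).2 isEmptyElim]

theorem eq_iSup_div_of_forall_le_iff [Finite ι]
    (h : ∀ t, y ≤ t ↔ ∀ k, A k + s k * t ≤ b k) :
    y = ⨆ k : {k // s k < 0}, (A k - b k) / -s k :=
  have := nonempty_neg_of_forall_le_iff h
  eq_of_forall_ge_iff fun t =>
    (le_iff_forall_div_le h t).trans (ciSup_le_iff (Finite.bddAbove_range _)).symm

end SolutionRay

theorem sum_mul_sub_div_neg {ι : Type*} [Fintype ι] (a x : ι → ℝ) (b s : ℝ) :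
    (∑ i, a i * x i - b) / -s = ∑ i, a i / -s * x i + b / s := by
  rw [sub_div, Finset.sum_div, div_neg, sub_neg_eq_add]
  congr 1
  exact Finset.sum_congr rfl fun i _ => by ring

theorem nonneg_of_affine_le_of_monotoneOn {ι : Type*} [Fintype ι] [DecidableEq ι]
    {Q : Set (ι → ℝ)} {g : (ι → ℝ) → ℝ} (hQrec : Q + Set.Iic (0 : ι → ℝ) ⊆ Q)
    (hmono : MonotoneOn g Q) {x₀ : ι → ℝ} (hx₀ : x₀ ∈ Q) {c : ι → ℝ} {d : ℝ}
    (hle : ∀ x ∈ Q, ∑ i, c i * x i + d ≤ g x) (i : ι) : 0 ≤ c i := by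
  suffices -c i ≤ 0 by linarith
  refine nonpos_of_forall_ge_mul_le (c := 0) (C := g x₀ - (∑ j, c j * x₀ j + d))
    fun t ht => ?_
  have hdir : Pi.single i (-t) ∈ Set.Iic (0 : ι → ℝ) := Pi.single_nonpos.2 (by linarith)
  have hy : x₀ + Pi.single i (-t) ∈ Q := hQrec (Set.add_mem_add hx₀ hdir)
  have hgy : g (x₀ + Pi.single i (-t)) ≤ g x₀ := 
    hmono hy hx₀ ((add_le_iff_nonpos_right x₀).2 hdir)
  have hsum :
      ∑ j, c j * (x₀ + Pi.single i (-t) : ι → ℝ) j = ∑ j, c j * x₀ j - c i * t := by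
    simp [mul_add, Finset.sum_add_distrib, Pi.single_apply, sub_eq_add_neg]
  linarith [hle _ hy]

namespace IsRatHPolyhedronProd

variable {n : ℕ}

theorem inter {S T : Set ((Fin n → ℝ) × ℝ)} (hS : IsRatHPolyhedronProd n S)
    (hT : IsRatHPolyhedronProd n T) : IsRatHPolyhedronProd n (S ∩ T) := by
  obtain ⟨M, a, s, b, rfl⟩ := hS
  obtain ⟨N, a', s', b', rfl⟩ := hT
  refine ⟨M + N, Fin.append a a', Fin.append s s', Fin.append b b', ?_⟩
  ext p
  simp only [Set.mem_inter_iff, Set.mem_iInter, Set.mem_ofPred_eq, Fin.forall_fin_add,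
    Fin.append_left, Fin.append_right]

theorem preimage_fst {Q : Set (Fin n → ℝ)} (hQ : IsRatHPolyhedron n Q) :
    IsRatHPolyhedronProd n (Prod.fst ⁻¹' Q) := by
  obtain ⟨M, a, b, rfl⟩ := hQ
  exact ⟨M, a, 0, b, by ext p; simp⟩

theorem setOf_forall_affine_le {N : ℕ} (s : Fin N → Fin n → ℚ) (a : Fin N → ℚ) :
    IsRatHPolyhedronProd n {p | ∀ k, ∑ i, (s k i : ℝ) * p.1 i + a k ≤ p.2} := by
  refine ⟨N, s, -1, -a, ?_⟩
  ext p
  simp only [Set.mem_ofPred_eq, Set.mem_iInter, Pi.neg_apply, Pi.one_apply, Rat.cast_neg,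
    Rat.cast_one]
  refine forall_congr' fun k => ?_
  constructor <;> intro h <;> linarith

end IsRatHPolyhedronProd

section MaxAffine

variable {n : ℕ} {Q : Set (Fin n → ℝ)} {g : (Fin n → ℝ) → ℝ}

theorem isRatHPolyhedronProd_epigraph_of_eq_iSup {N : ℕ} (hQ : IsRatHPolyhedron n Q)
    (hN : 0 < N) (s : Fin N → Fin n → ℚ) (a : Fin N → ℚ)
    (hg : ∀ x ∈ Q, g x = ⨆ k, (∑ i, (s k i : ℝ) * x i) + (a k : ℝ)) :
    IsRatHPolyhedronProd n {p : (Fin n → ℝ) × ℝ | p.1 ∈ Q ∧ g p.1 ≤ p.2} := by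
  have : Nonempty (Fin N) := ⟨⟨0, hN⟩⟩
  convert (IsRatHPolyhedronProd.preimage_fst hQ).inter (.setOf_forall_affine_le s a) using 1
  ext ⟨x, t⟩
  refine and_congr_right fun hx => ?_
  rw [hg x hx, ciSup_le_iff (Finite.bddAbove_range _)]
  rfl

theorem exists_fin_eq_iSup_of_fintype {ι : Type*} [Fintype ι] [Nonempty ι]
    (s : ι → Fin n → ℚ) (a : ι → ℚ) (hs : ∀ k i, 0 ≤ s k i)
    (hg : ∀ x ∈ Q, g x = ⨆ k, (∑ i, (s k i : ℝ) * x i) + (a k : ℝ)) :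
    ∃ (N : ℕ) (_ : 0 < N) (s : Fin N → Fin n → ℚ) (a : Fin N → ℚ),
      (∀ k i, 0 ≤ s k i) ∧
      ∀ x ∈ Q, g x = ⨆ k : Fin N, ((∑ i, (s k i : ℝ) * x i) + (a k : ℝ)) := by
  let e := (Fintype.equivFin ι).symm
  refine ⟨Fintype.card ι, Fintype.card_pos, s ∘ e, a ∘ e, fun k => hs (e k),
    fun x hx => ?_⟩
  rw [hg x hx]
  exact (e.iSup_comp (g := fun k => (∑ i, (s k i : ℝ) * x i) + (a k : ℝ))).symm

theorem exists_maxAffine_of_isRatHPolyhedronProd_epigraph (hQne : Q.Nonempty)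
    (hQrec : Q + Set.Iic (0 : Fin n → ℝ) ⊆ Q) (hmono : MonotoneOn g Q)
    (hepi : IsRatHPolyhedronProd n {p : (Fin n → ℝ) × ℝ | p.1 ∈ Q ∧ g p.1 ≤ p.2}) :
    ∃ (N : ℕ) (_ : 0 < N) (s : Fin N → Fin n → ℚ) (a : Fin N → ℚ),
      (∀ k i, 0 ≤ s k i) ∧
      ∀ x ∈ Q, g x = ⨆ k : Fin N, ((∑ i, (s k i : ℝ) * x i) + (a k : ℝ)) := by
  obtain ⟨N, a, s, b, hEpi⟩ := hepi
  obtain ⟨x₀, hx₀⟩ := hQne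
  have hsol : ∀ x ∈ Q, ∀ t,
      g x ≤ t ↔ ∀ k, ∑ i, (a k i : ℝ) * x i + s k * t ≤ b k :=
    fun x hx t => by simpa [hx] using Set.ext_iff.1 hEpi (x, t)
  have := nonempty_neg_of_forall_le_iff (hsol x₀ hx₀)
  have hrep : ∀ x ∈ Q, g x = ⨆ k : {k // (s k : ℝ) < 0},
      ∑ i, ((a k i / -s k : ℚ) : ℝ) * x i + ((b k / s k : ℚ) : ℝ) := by
    intro x hx
    rw [eq_iSup_div_of_forall_le_iff (hsol x hx)]
    push_cast
    simp only [sum_mul_sub_div_neg]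
  refine exists_fin_eq_iSup_of_fintype _ _ (fun k i => ?_) hrep
  have hle : ∀ x ∈ Q,
      ∑ i, ((a k i / -s k : ℚ) : ℝ) * x i + ((b k / s k : ℚ) : ℝ) ≤ g x := by
    intro x hx
    rw [hrep x hx]
    exact Finite.le_ciSup_of_le k le_rfl
  exact_mod_cast nonneg_of_affine_le_of_monotoneOn hQrec hmono hx₀ hle i

end MaxAffine

theorem epigraph_ratHPolyhedron_iff_maxAffine_general (n : ℕ)
    (Q : Set (Fin n → ℝ)) (hQne : Q.Nonempty)
    (hQpoly : IsRatHPolyhedron n Q)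
    (hQrec : Q + {q : Fin n → ℝ | ∀ i, q i ≤ 0} ⊆ Q)
    (g : (Fin n → ℝ) → ℝ)
    (hmono : ∀ x ∈ Q, ∀ y ∈ Q, (∀ i, x i ≤ y i) → g x ≤ g y) :
    IsRatHPolyhedronProd n {p : (Fin n → ℝ) × ℝ | p.1 ∈ Q ∧ g p.1 ≤ p.2} ↔
    ∃ (N : ℕ) (_ : 0 < N) (s : Fin N → Fin n → ℚ) (a : Fin N → ℚ),
      (∀ k i, 0 ≤ s k i) ∧
      ∀ x ∈ Q, g x = ⨆ k : Fin N, ((∑ i, (s k i : ℝ) * x i) + (a k : ℝ)) := by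
  constructor
  · exact exists_maxAffine_of_isRatHPolyhedronProd_epigraph hQne hQrec hmono
  · rintro ⟨N, hN, s, a, -, hg⟩
    exact isRatHPolyhedronProd_epigraph_of_eq_iSup hQpoly hN s a hg

/-- For a nonempty rational H-polyhedron `Q ⊆ ℝⁿ_{≤0}` with
`Q + ℝⁿ_{≤0} ⊆ Q` and `g` convex on `Q` and increasing in each variable on `Q`,
the epigraph of `g` (over `Q`) is a rational H-polyhedron iff `g` is, on `Q`, a
finite maximum of rational affine functions with nonnegative slopes. -/
theorem epigraph_ratHPolyhedron_iff_maxAffine (n : ℕ) (hn : 0 < n)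
    (Q : Set (Fin n → ℝ)) (hQne : Q.Nonempty)
    (hQsub : Q ⊆ {x : Fin n → ℝ | ∀ i, x i ≤ 0})
    (hQpoly : IsRatHPolyhedron n Q)
    (hQrec : Q + {q : Fin n → ℝ | ∀ i, q i ≤ 0} ⊆ Q)
    (g : (Fin n → ℝ) → ℝ)
    (hconv : ConvexOn ℝ Q g)
    (hmono : ∀ x ∈ Q, ∀ y ∈ Q, (∀ i, x i ≤ y i) → g x ≤ g y) :
    IsRatHPolyhedronProd n {p : (Fin n → ℝ) × ℝ | p.1 ∈ Q ∧ g p.1 ≤ p.2} ↔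
    ∃ (N : ℕ) (_ : 0 < N) (s : Fin N → Fin n → ℚ) (a : Fin N → ℚ),
      (∀ k i, 0 ≤ s k i) ∧
      ∀ x ∈ Q, g x = ⨆ k : Fin N, ((∑ i, (s k i : ℝ) * x i) + (a k : ℝ)) :=
  epigraph_ratHPolyhedron_iff_maxAffine_general n Q hQne hQpoly hQrec g hmono
end

section
/- Let n be a positive integer and let Q ⊆ {x ∈ ℝⁿ : ∀i, xᵢ ≤ 0} be a nonempty H-polyhedron (not necessarily rational) such that Q + ℝⁿ_{≤0} ⊆ Q, and let g : ℝⁿ → ℝ be a function that is convex on Q and increasing in each variable on Q (if x, y ∈ Q with xᵢ ≤ yᵢ for all i, then g(x) ≤ g(y)). Then the following are equivalent: (1) the epigraph epi(g) = {(x,t) ∈ ℝⁿ × ℝ : x ∈ Q and t ≥ g(x)} is an H-polyhedron in ℝⁿ × ℝ; (2) there exist finitely many vectors s₁, …, s_N ∈ ℝⁿ with all components nonnegative and real numbers a₁, …, a_N such that g(x) = max_{1≤i≤N} (⟨sᵢ,x⟩ + aᵢ) for all x ∈ Q. -/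
/-!
If the epigraph of `g` over `Q` is cut out by inequalities `⟨a, x⟩ + s t ≤ b`, no `s` can be
positive (the epigraph is unbounded above in `t`), those with `s = 0` only cut out `Q`, and those
with `s < 0` say `t ≥ ℓ(x)` for an affine `ℓ`; hence `g` is the maximum of these `ℓ`, and some
`s` is negative since otherwise the epigraph would also be unbounded below in `t`. A piece `ℓ`
attaining the maximum at `x ∈ Q` has nonnegative slopes: `x - eᵢ` stays in `Q` and `g` does not
increase there, while `ℓ` drops by its `i`-th slope. Conversely, the epigraph of a finite maximum
of affine functions over an H-polyhedron is cut out by the inequalities of `Q` together with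
`t ≥ ℓ(x)` for each piece.
-/

open Pointwise

/-- An H-polyhedron in `ℝⁿ`: a finite intersection of closed half-spaces
`{x : ⟨a,x⟩ ≤ b}` with real normal vectors `a` and real constants `b`. -/
def IsHPolyhedron (n : ℕ) (Q : Set (Fin n → ℝ)) : Prop :=
  ∃ (N : ℕ) (a : Fin N → Fin n → ℝ) (b : Fin N → ℝ),
    Q = ⋂ k : Fin N, {x : Fin n → ℝ | ∑ i, a k i * x i ≤ b k}

/-- An H-polyhedron in `ℝⁿ × ℝ`: a finite intersection of closed half-spaces
`{(x,t) : ⟨a,x⟩ + s·t ≤ b}` with `a ∈ ℝⁿ` and `s, b ∈ ℝ`. -/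
def IsHPolyhedronProd (n : ℕ) (S : Set ((Fin n → ℝ) × ℝ)) : Prop :=
  ∃ (N : ℕ) (a : Fin N → Fin n → ℝ) (s : Fin N → ℝ) (b : Fin N → ℝ),
    S = ⋂ k : Fin N, {p : (Fin n → ℝ) × ℝ |
      (∑ i, a k i * p.1 i) + s k * p.2 ≤ b k}

open Matrix Set

theorem IsHPolyhedronProd.of_iInter {n : ℕ} {κ : Type*} [Fintype κ] (a : κ → Fin n → ℝ)
    (s b : κ → ℝ) :
    IsHPolyhedronProd n (⋂ k, {p : (Fin n → ℝ) × ℝ | a k ⬝ᵥ p.1 + s k * p.2 ≤ b k}) := by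
  let e := Fintype.equivFin κ
  exact ⟨_, a ∘ e.symm, s ∘ e.symm, b ∘ e.symm, (e.symm.surjective.iInter_comp
    fun k => {p : (Fin n → ℝ) × ℝ | a k ⬝ᵥ p.1 + s k * p.2 ≤ b k}).symm⟩

theorem IsHPolyhedronProd.inter {n : ℕ} {S T : Set ((Fin n → ℝ) × ℝ)}
    (hS : IsHPolyhedronProd n S) (hT : IsHPolyhedronProd n T) : IsHPolyhedronProd n (S ∩ T) := by
  obtain ⟨_, a, s, b, rfl⟩ := hS
  obtain ⟨_, a', s', b', rfl⟩ := hT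
  have h := IsHPolyhedronProd.of_iInter (Sum.elim a a') (Sum.elim s s') (Sum.elim b b')
  simp only [iInter_sum, Sum.elim_inl, Sum.elim_inr] at h
  exact h

theorem IsHPolyhedron.prod_univ {n : ℕ} {Q : Set (Fin n → ℝ)} (hQ : IsHPolyhedron n Q) :
    IsHPolyhedronProd n (Q ×ˢ univ) := by
  obtain ⟨N, a, b, rfl⟩ := hQ
  refine ⟨N, a, 0, b, ?_⟩
  ext p
  simp

theorem isHPolyhedronProd_epigraph_of_eq_iSup {n : ℕ} {κ : Type*} [Fintype κ] [Nonempty κ]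
    {Q : Set (Fin n → ℝ)} {g : (Fin n → ℝ) → ℝ} (hQ : IsHPolyhedron n Q)
    (c : κ → Fin n → ℝ) (d : κ → ℝ) (hg : ∀ x ∈ Q, g x = ⨆ k, c k ⬝ᵥ x + d k) :
    IsHPolyhedronProd n {p : (Fin n → ℝ) × ℝ | p.1 ∈ Q ∧ g p.1 ≤ p.2} := by
  have hepi : {p : (Fin n → ℝ) × ℝ | p.1 ∈ Q ∧ g p.1 ≤ p.2} =
      Q ×ˢ univ ∩ ⋂ k, {p | c k ⬝ᵥ p.1 + (-1) * p.2 ≤ -d k} := by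
    ext ⟨x, t⟩
    simp only [mem_ofPred_eq, mem_inter_iff, mem_prod, mem_univ, and_true, mem_iInter]
    refine and_congr_right fun hx => ?_
    rw [hg x hx, ciSup_le_iff (Finite.bddAbove_range _)]
    exact forall_congr' fun k => by constructor <;> intro h <;> linarith
  rw [hepi]
  exact hQ.prod_univ.inter (.of_iInter c _ _)

section Epigraph

variable {ι κ : Type*} [Fintype ι] {Q : Set (ι → ℝ)} {g : (ι → ℝ) → ℝ}

theorem exists_fin_eq_iSup_of_eq_iSup [Fintype κ] [Nonempty κ] (c : κ → ι → ℝ) (d : κ → ℝ)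
    (hc : ∀ k i, 0 ≤ c k i) (hg : ∀ x ∈ Q, g x = ⨆ k, c k ⬝ᵥ x + d k) :
    ∃ (N : ℕ) (_ : 0 < N) (s : Fin N → ι → ℝ) (a : Fin N → ℝ),
      (∀ k i, 0 ≤ s k i) ∧ ∀ x ∈ Q, g x = ⨆ k : Fin N, ((∑ i, s k i * x i) + a k) := by
  let e := Fintype.equivFin κ
  exact ⟨_, Fintype.card_pos, c ∘ e.symm, d ∘ e.symm, fun k => hc _,
    fun x hx => (hg x hx).trans (e.symm.iSup_comp (g := fun k => c k ⬝ᵥ x + d k)).symm⟩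

theorem nonneg_of_affine_le_of_eq (hQrec : Q + {q : ι → ℝ | ∀ i, q i ≤ 0} ⊆ Q)
    (hmono : ∀ x ∈ Q, ∀ y ∈ Q, (∀ i, x i ≤ y i) → g x ≤ g y) {c : ι → ℝ} {d : ℝ} {x : ι → ℝ}
    (hx : x ∈ Q) (hle : ∀ y ∈ Q, c ⬝ᵥ y + d ≤ g y) (heq : c ⬝ᵥ x + d = g x) (i : ι) :
    0 ≤ c i := by
  classical
  have hdown : Pi.single i (-1) ∈ {q : ι → ℝ | ∀ j, q j ≤ 0} := fun j => by
    by_cases hj : j = i <;> simp [hj]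
  have hy : x + Pi.single i (-1) ∈ Q := hQrec (add_mem_add hx hdown)
  have hgy : g (x + Pi.single i (-1)) ≤ g x :=
    hmono _ hy _ hx fun j => by simpa using add_le_add_left (hdown j) (x j)
  have hly := hle _ hy
  rw [dotProduct_add, dotProduct_single] at hly
  linarith

theorem dotProduct_add_mul_le_iff_of_neg {c x : ι → ℝ} {s t b : ℝ} (hs : s < 0) :
    c ⬝ᵥ x + s * t ≤ b ↔ (-s)⁻¹ • c ⬝ᵥ x + b / s ≤ t := by
  have hrhs : (-s)⁻¹ * (c ⬝ᵥ x) + b / s = (b - c ⬝ᵥ x) / s := by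
    field_simp
    ring
  rw [smul_dotProduct, smul_eq_mul, hrhs, div_le_iff_of_neg' hs]
  constructor <;> intro h <;> linarith

variable {a : κ → ι → ℝ} {s b : κ → ℝ}
  (hepi : ∀ x t, x ∈ Q ∧ g x ≤ t ↔ ∀ k, a k ⬝ᵥ x + s k * t ≤ b k)
include hepi

theorem coeff_nonpos_of_epigraph_iff {x : ι → ℝ} (hx : x ∈ Q) (k : κ) : s k ≤ 0 := by
  by_contra! hk
  have h := (hepi x (max (g x) ((b k - a k ⬝ᵥ x) / s k + 1))).1 ⟨hx, le_max_left _ _⟩ k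
  have hlt : b k - a k ⬝ᵥ x < s k * ((b k - a k ⬝ᵥ x) / s k + 1) := by
    rw [mul_add, mul_div_cancel₀ _ hk.ne']
    linarith
  nlinarith [le_max_right (g x) ((b k - a k ⬝ᵥ x) / s k + 1)]

theorem exists_coeff_neg_of_epigraph_iff {x : ι → ℝ} (hx : x ∈ Q) : ∃ k, s k < 0 := by
  by_contra! h
  have hzero : ∀ k, s k = 0 := fun k => le_antisymm (coeff_nonpos_of_epigraph_iff hepi hx k) (h k)
  have hbelow := (hepi x (g x - 1)).2 fun k => by
    simpa [hzero k] using (hepi x (g x)).1 ⟨hx, le_rfl⟩ k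
  linarith [hbelow.2]

theorem affine_le_of_epigraph_iff {x : ι → ℝ} (hx : x ∈ Q) {k : κ} (hk : s k < 0) :
    (-s k)⁻¹ • a k ⬝ᵥ x + b k / s k ≤ g x :=
  (dotProduct_add_mul_le_iff_of_neg hk).1 ((hepi x (g x)).1 ⟨hx, le_rfl⟩ k)

theorem exists_affine_eq_of_epigraph_iff [Fintype κ] {x : ι → ℝ} (hx : x ∈ Q) :
    ∃ k, s k < 0 ∧ (-s k)⁻¹ • a k ⬝ᵥ x + b k / s k = g x := by
  classical
  obtain ⟨k₀, hk₀⟩ := exists_coeff_neg_of_epigraph_iff hepi hx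
  obtain ⟨k, hk, hmax⟩ := (Finset.univ.filter fun k => s k < 0).exists_max_image
    (fun k => (-s k)⁻¹ • a k ⬝ᵥ x + b k / s k) ⟨k₀, by simpa using hk₀⟩
  rw [Finset.mem_filter_univ] at hk
  refine ⟨k, hk, le_antisymm (affine_le_of_epigraph_iff hepi hx hk) ((hepi x _).2 fun j => ?_).2⟩
  rcases (coeff_nonpos_of_epigraph_iff hepi hx j).lt_or_eq with hj | hj
  · exact (dotProduct_add_mul_le_iff_of_neg hj).2 (hmax j (by simpa using hj))
  · simpa [hj] using (hepi x (g x)).1 ⟨hx, le_rfl⟩ j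

theorem exists_fin_eq_iSup_of_epigraph_iff [Fintype κ]
    (hQrec : Q + {q : ι → ℝ | ∀ i, q i ≤ 0} ⊆ Q)
    (hmono : ∀ x ∈ Q, ∀ y ∈ Q, (∀ i, x i ≤ y i) → g x ≤ g y) {x₀ : ι → ℝ} (hx₀ : x₀ ∈ Q) :
    ∃ (N : ℕ) (_ : 0 < N) (s : Fin N → ι → ℝ) (a : Fin N → ℝ),
      (∀ k i, 0 ≤ s k i) ∧ ∀ x ∈ Q, g x = ⨆ k : Fin N, ((∑ i, s k i * x i) + a k) := by
  let G := {k : κ // s k < 0 ∧ ∀ i, 0 ≤ ((-s k)⁻¹ • a k) i}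
  have hattained : ∀ x ∈ Q, ∃ k : G, (-s k)⁻¹ • a k ⬝ᵥ x + b k / s k = g x := fun x hx => by
    obtain ⟨k, hk, heq⟩ := exists_affine_eq_of_epigraph_iff hepi hx
    exact ⟨⟨k, hk, nonneg_of_affine_le_of_eq hQrec hmono hx
      (fun y hy => affine_le_of_epigraph_iff hepi hy hk) heq⟩, heq⟩
  obtain ⟨k₀, -⟩ := hattained x₀ hx₀
  have : Nonempty G := ⟨k₀⟩
  refine exists_fin_eq_iSup_of_eq_iSup (fun k : G => (-s k)⁻¹ • a k) (fun k => b k / s k)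
    (fun k => k.2.2) fun x hx => ?_
  obtain ⟨k, hk⟩ := hattained x hx
  refine le_antisymm ?_ (ciSup_le fun j => affine_le_of_epigraph_iff hepi hx j.2.1)
  rw [← hk]
  exact le_ciSup (Finite.bddAbove_range fun j : G => (-s j)⁻¹ • a j ⬝ᵥ x + b j / s j) k

end Epigraph

theorem epigraph_hPolyhedron_iff_maxAffine_general (n : ℕ)
    (Q : Set (Fin n → ℝ)) (hQne : Q.Nonempty)
    (hQpoly : IsHPolyhedron n Q)
    (hQrec : Q + {q : Fin n → ℝ | ∀ i, q i ≤ 0} ⊆ Q)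
    (g : (Fin n → ℝ) → ℝ)
    (hmono : ∀ x ∈ Q, ∀ y ∈ Q, (∀ i, x i ≤ y i) → g x ≤ g y) :
    IsHPolyhedronProd n {p : (Fin n → ℝ) × ℝ | p.1 ∈ Q ∧ g p.1 ≤ p.2} ↔
    ∃ (N : ℕ) (_ : 0 < N) (s : Fin N → Fin n → ℝ) (a : Fin N → ℝ),
      (∀ k i, 0 ≤ s k i) ∧
      ∀ x ∈ Q, g x = ⨆ k : Fin N, ((∑ i, s k i * x i) + a k) := by
  constructor
  · rintro ⟨N, a, s, b, hepi⟩
    obtain ⟨x₀, hx₀⟩ := hQne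
    exact exists_fin_eq_iSup_of_epigraph_iff (a := a) (s := s) (b := b)
      (fun x t => by simpa [dotProduct] using Set.ext_iff.mp hepi (x, t)) hQrec hmono hx₀
  · rintro ⟨N, hN, s, a, -, hg⟩
    have : Nonempty (Fin N) := ⟨⟨0, hN⟩⟩
    exact isHPolyhedronProd_epigraph_of_eq_iSup hQpoly s a hg

/-- For a nonempty (not necessarily rational) H-polyhedron `Q ⊆ ℝⁿ_{≤0}`
with `Q + ℝⁿ_{≤0} ⊆ Q` and `g` convex on `Q` and increasing in each variable on `Q`,
the epigraph of `g` (over `Q`) is an H-polyhedron iff `g` is, on `Q`, a finite maximum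
of affine functions with nonnegative slopes. -/
theorem epigraph_hPolyhedron_iff_maxAffine (n : ℕ) (hn : 0 < n)
    (Q : Set (Fin n → ℝ)) (hQne : Q.Nonempty)
    (hQsub : Q ⊆ {x : Fin n → ℝ | ∀ i, x i ≤ 0})
    (hQpoly : IsHPolyhedron n Q)
    (hQrec : Q + {q : Fin n → ℝ | ∀ i, q i ≤ 0} ⊆ Q)
    (g : (Fin n → ℝ) → ℝ)
    (hconv : ConvexOn ℝ Q g)
    (hmono : ∀ x ∈ Q, ∀ y ∈ Q, (∀ i, x i ≤ y i) → g x ≤ g y) :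
    IsHPolyhedronProd n {p : (Fin n → ℝ) × ℝ | p.1 ∈ Q ∧ g p.1 ≤ p.2} ↔
    ∃ (N : ℕ) (_ : 0 < N) (s : Fin N → Fin n → ℝ) (a : Fin N → ℝ),
      (∀ k i, 0 ≤ s k i) ∧
      ∀ x ∈ Q, g x = ⨆ k : Fin N, ((∑ i, s k i * x i) + a k) :=
  epigraph_hPolyhedron_iff_maxAffine_general n Q hQne hQpoly hQrec g hmono
end

section
/- Let n be a positive integer and let Q ⊆ {x ∈ ℝⁿ : ∀i, xᵢ ≤ 0} be a nonempty rational H-polyhedron such that Q + ℝⁿ_{≤0} ⊆ Q. Let s₁, …, s_N ∈ ℚⁿ have all components nonnegative, let a₁, …, a_N ∈ ℚ, and define g : Q → ℝ by g(x) = max_{1≤i≤N} (⟨sᵢ,x⟩ + aᵢ); assume g is increasing in each variable on Q. Let h be the convex conjugate of g (with g extended by +∞ outside Q), i.e., for x ∈ ℝⁿ, h(x) = sup_{y∈Q} (⟨x,y⟩ − g(y)), with domain D = {x : this supremum is finite}. Then the epigraph epi(h) = {(x,t) ∈ ℝⁿ × ℝ : x ∈ D and t ≥ h(x)} is a rational V-polyhedron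 in ℝⁿ × ℝ: there exist finite sets Y ⊆ ℚⁿ × ℚ and V ⊆ ℚⁿ × ℚ such that epi(h) = convexHull(Y) + cone(V), where cone(V) is the set of all finite nonnegative linear combinations of elements of V. -/
open Pointwise

/-- The canonical map from a rational point of `ℚⁿ × ℚ` to `ℝⁿ × ℝ`. -/
def ratToReal {n : ℕ} (p : (Fin n → ℚ) × ℚ) : (Fin n → ℝ) × ℝ :=
  (fun i => (p.1 i : ℝ), (p.2 : ℝ))

/-!
Write `B((v, r), (y, u)) = ⟨v, y⟩ - r u`. A point `(x, t)` lies in the epigraph of `h` iff the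
affine function `B((x, t), (y, 1)) = ⟨x, y⟩ - t` stays below `g` on `Q`. With
`Q = {y | ∀ j, B((αⱼ, βⱼ), (y, 1)) ≤ 0}` and `g y = maxₖ B((sₖ, -aₖ), (y, 1))`, this says that the
linear system `⟨αⱼ, y⟩ ≤ βⱼ`, `⟨sₖ, y⟩ + aₖ ≤ u`, feasible because `Q ≠ ∅`, implies
`⟨x, y⟩ - u ≤ t`. By the affine Farkas lemma this holds iff `(x, 1) = ∑ νⱼ (αⱼ, 0) + ∑ μₖ (sₖ, 1)`
with `ν, μ ≥ 0` and `∑ νⱼ βⱼ - ∑ μₖ aₖ ≤ t`, that is, iff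
`(x, t) ∈ conv {(sₖ, -aₖ)} + cone {(αⱼ, βⱼ), (0, 1)}`, and these generators are rational.
-/

section

variable {E : Type*} [AddCommGroup E] [Module ℝ E]

-- Farkas' lemma. If the constraints other than `A 0` do not already force `c x ≤ 0`, a witness
-- gives `x₁` with `A 0 x₁ = 1`; projecting along `x₁` onto `ker (A 0)` removes `A 0`.
theorem exists_nonneg_eq_sum_smul_of_forall_nonpos_fin : ∀ {m : ℕ} (A : Fin m → Module.Dual ℝ E)
    (c : Module.Dual ℝ E), (∀ x, (∀ i, A i x ≤ 0) → c x ≤ 0) →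
      ∃ μ : Fin m → ℝ, 0 ≤ μ ∧ c = ∑ i, μ i • A i
  | 0, A, c, H => ⟨0, le_rfl, LinearMap.ext fun x => by
      simpa using le_antisymm (H x finZeroElim) (by simpa using H (-x) finZeroElim)⟩
  | m + 1, A, c, H => by
    by_cases htail : ∀ x, (∀ i : Fin m, A i.succ x ≤ 0) → c x ≤ 0
    · obtain ⟨ν, hν, rfl⟩ :=
        exists_nonneg_eq_sum_smul_of_forall_nonpos_fin (fun i : Fin m => A i.succ) c htail
      exact ⟨Fin.cons 0 ν, Fin.le_cons.2 ⟨le_rfl, hν⟩, by simp [Fin.sum_univ_succ]⟩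
    push Not at htail
    obtain ⟨x, hx, hcx⟩ := htail
    have hA0 : 0 < A 0 x := by
      by_contra! h
      exact hcx.not_ge (H x (Fin.cases h hx))
    set x₁ := (A 0 x)⁻¹ • x
    have hA0x₁ : A 0 x₁ = 1 := by simp [x₁, hA0.ne']
    have hx₁ (i : Fin m) : A i.succ x₁ ≤ 0 := by
      simpa [x₁] using mul_nonpos_of_nonneg_of_nonpos (inv_nonneg.2 hA0.le) (hx i)
    have hcx₁ : 0 < c x₁ := by simpa [x₁] using mul_pos (inv_pos.2 hA0) hcx
    obtain ⟨ν, hν, hc⟩ := exists_nonneg_eq_sum_smul_of_forall_nonpos_fin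
      (fun i : Fin m => A i.succ - A i.succ x₁ • A 0) (c - c x₁ • A 0) fun z hz => by
        simpa [hA0x₁, mul_comm] using H (z - A 0 z • x₁)
          (Fin.cases (by simp [hA0x₁]) fun i => by simpa [mul_comm] using hz i)
    refine ⟨Fin.cons (c x₁ - ∑ i, ν i * A i.succ x₁) ν, Fin.le_cons.2 ⟨?_, hν⟩, ?_⟩
    · have : ∑ i, ν i * A i.succ x₁ ≤ 0 :=
        Finset.sum_nonpos fun i _ => mul_nonpos_of_nonneg_of_nonpos (hν i) (hx₁ i)
      simp only [Pi.zero_apply]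
      linarith
    · rw [Fin.sum_univ_succ]
      conv_lhs => rw [sub_eq_iff_eq_add.1 hc]
      simp only [Fin.cons_zero, Fin.cons_succ, smul_sub, Finset.sum_sub_distrib, smul_smul]
      rw [sub_smul (c x₁) (∑ i, ν i * A i.succ x₁) (A 0), Finset.sum_smul]
      abel

theorem exists_nonneg_eq_sum_smul_of_forall_nonpos {ι : Type*} [Fintype ι]
    (A : ι → Module.Dual ℝ E) (c : Module.Dual ℝ E) (H : ∀ x, (∀ i, A i x ≤ 0) → c x ≤ 0) :
    ∃ μ : ι → ℝ, 0 ≤ μ ∧ c = ∑ i, μ i • A i := by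
  let e := Fintype.equivFin ι
  obtain ⟨μ, hμ, hc⟩ := exists_nonneg_eq_sum_smul_of_forall_nonpos_fin (A ∘ e.symm) c
    fun x hx => H x fun i => by simpa using hx (e i)
  exact ⟨μ ∘ e, fun i => hμ (e i), by rw [hc, ← e.symm.sum_comp]; simp⟩

theorem apply_nonpos_of_forall_apply_le {ι : Type*} (A : ι → Module.Dual ℝ E) (b : ι → ℝ)
    (c : Module.Dual ℝ E) (d : ℝ) (hfeas : ∃ y, ∀ i, A i y ≤ b i)
    (H : ∀ y, (∀ i, A i y ≤ b i) → c y ≤ d) {z : E} (hz : ∀ i, A i z ≤ 0) : c z ≤ 0 := by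
  obtain ⟨y, hy⟩ := hfeas
  by_contra! hcz
  have hr : 0 ≤ (d - c y + 1) / c z := div_nonneg (by linarith [H y hy]) hcz.le
  have := H (y + ((d - c y + 1) / c z) • z) fun i => by
    simpa using add_le_of_le_of_nonpos (hy i) (mul_nonpos_of_nonneg_of_nonpos hr (hz i))
  simp only [map_add, map_smul, smul_eq_mul, div_mul_cancel₀ _ hcz.ne'] at this
  linarith

theorem exists_nonneg_eq_sum_smul_of_forall_le {ι : Type*} [Fintype ι]
    (A : ι → Module.Dual ℝ E) (b : ι → ℝ) (c : Module.Dual ℝ E) (d : ℝ)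
    (hfeas : ∃ y, ∀ i, A i y ≤ b i) (H : ∀ y, (∀ i, A i y ≤ b i) → c y ≤ d) :
    ∃ μ : ι → ℝ, 0 ≤ μ ∧ c = ∑ i, μ i • A i ∧ ∑ i, μ i * b i ≤ d := by
  -- homogenise: `A i y ≤ b i * w` and `0 ≤ w` on `(y, w) : E × ℝ`
  let F : Option ι → Module.Dual ℝ (E × ℝ) := fun o =>
    o.elim (-LinearMap.snd ℝ E ℝ) fun i => A i ∘ₗ LinearMap.fst ℝ E ℝ - b i • LinearMap.snd ℝ E ℝ
  obtain ⟨μ, hμ, hG⟩ := exists_nonneg_eq_sum_smul_of_forall_nonpos F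
    (c ∘ₗ LinearMap.fst ℝ E ℝ - d • LinearMap.snd ℝ E ℝ) <| by
      rintro ⟨y, w⟩ hyw
      have hw : 0 ≤ w := by simpa [F] using hyw none
      have hy (i : ι) : A i y ≤ b i * w := by simpa [F] using hyw (some i)
      simp only [LinearMap.sub_apply, LinearMap.comp_apply, LinearMap.fst_apply,
        LinearMap.smul_apply, LinearMap.snd_apply, smul_eq_mul, sub_nonpos]
      rcases hw.eq_or_lt with rfl | hw
      · simpa using apply_nonpos_of_forall_apply_le A b c d hfeas H (by simpa using hy)
      · have := H (w⁻¹ • y) fun i => by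
          simpa [inv_mul_le_iff₀ hw, mul_comm] using hy i
        simpa [inv_mul_le_iff₀ hw, mul_comm] using this
  refine ⟨μ ∘ some, fun i => hμ (some i), ?_, ?_⟩
  · ext z
    simpa [F, Fintype.sum_option] using congr($hG (z, 0))
  · have hd : -d = -μ none + -∑ i, μ (some i) * b i := by
      simpa [F, Fintype.sum_option] using congr($hG (0, 1))
    simp only [Function.comp_apply]
    linarith [show 0 ≤ μ none from hμ none]

theorem apply_le_of_mem_convexHull_add_cone {κ ι : Type*} [Fintype ι] {Y : κ → E} {V : ι → E}
    (f : E →ₗ[ℝ] ℝ) {b : ℝ} (hY : ∀ k, f (Y k) ≤ b) (hV : ∀ i, f (V i) ≤ 0) {p : E}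
    (hp : p ∈ convexHull ℝ (Set.range Y) +
      {z | ∃ c : ι → ℝ, (∀ i, 0 ≤ c i) ∧ z = ∑ i, c i • V i}) : f p ≤ b := by
  obtain ⟨q, hq, z, ⟨c, hc, rfl⟩, rfl⟩ := hp
  have hfq : f q ≤ b :=
    convexHull_min (Set.range_subset_iff.2 hY) (convex_halfSpace_le f.isLinear b) hq
  have hfz : f (∑ i, c i • V i) ≤ 0 := by
    simpa using Finset.sum_nonpos fun i _ => mul_nonpos_of_nonneg_of_nonpos (hc i) (hV i)
  simpa using add_le_of_le_of_nonpos hfq hfz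

end

section AffinePairing

variable {σ : Type*} [Fintype σ]

def affinePairing : ((σ → ℝ) × ℝ) →ₗ[ℝ] ((σ → ℝ) × ℝ) →ₗ[ℝ] ℝ :=
  (dotProductBilin ℝ ℝ).compl₁₂ (LinearMap.fst ℝ _ ℝ) (LinearMap.fst ℝ _ ℝ) -
    (LinearMap.mul ℝ ℝ).compl₁₂ (LinearMap.snd ℝ _ ℝ) (LinearMap.snd ℝ _ ℝ)

@[simp]
theorem affinePairing_apply (p q : (σ → ℝ) × ℝ) :
    affinePairing p q = p.1 ⬝ᵥ q.1 - p.2 * q.2 := rfl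

theorem affinePairing_injective : Function.Injective (affinePairing (σ := σ)) := by
  refine (injective_iff_map_eq_zero _).2 fun p hp => ?_
  have h := congr($hp (p.1, -p.2))
  simp only [affinePairing_apply, LinearMap.zero_apply, mul_neg, sub_neg_eq_add] at h
  have h₁ : 0 ≤ p.1 ⬝ᵥ p.1 := Finset.sum_nonneg fun i _ => mul_self_nonneg (p.1 i)
  have h₂ := mul_self_nonneg p.2
  exact Prod.ext (dotProduct_self_eq_zero.1 (by linarith)) (mul_self_eq_zero.1 (by linarith))

theorem exists_nonneg_of_forall_affinePairing_le_iSup {m : ℕ} {κ : Type*} [Fintype κ]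
    [Nonempty κ] (P : Fin m → (σ → ℝ) × ℝ) (G : κ → (σ → ℝ) × ℝ)
    (hQ : ∃ y, ∀ j, affinePairing (P j) (y, 1) ≤ 0) {p : (σ → ℝ) × ℝ}
    (hp : ∀ y, (∀ j, affinePairing (P j) (y, 1) ≤ 0) →
      affinePairing p (y, 1) ≤ ⨆ k, affinePairing (G k) (y, 1)) :
    ∃ (ν : Fin m → ℝ) (μ : κ → ℝ), 0 ≤ ν ∧ 0 ≤ μ ∧
      (p.1, (1 : ℝ)) = ∑ j, ν j • ((P j).1, (0 : ℝ)) + ∑ k, μ k • ((G k).1, (1 : ℝ)) ∧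
      ∑ j, ν j * (P j).2 + ∑ k, μ k * (G k).2 ≤ p.2 := by
  obtain ⟨y₀, hy₀⟩ := hQ
  -- `∀ i, A i (y, u) ≤ b i` says that `y` is in the polyhedron and that
  -- `affinePairing (G k) (y, 1) ≤ u` for all `k`
  let A : Fin m ⊕ κ → Module.Dual ℝ ((σ → ℝ) × ℝ) :=
    Sum.elim (fun j => affinePairing ((P j).1, 0)) fun k => affinePairing ((G k).1, 1)
  let b : Fin m ⊕ κ → ℝ := Sum.elim (fun j => (P j).2) fun k => (G k).2
  have hfeas : ∃ q, ∀ i, A i q ≤ b i := by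
    refine ⟨(y₀, ⨆ k, affinePairing (G k) (y₀, 1)), ?_⟩
    rintro (j | k)
    · simpa [A, b] using hy₀ j
    · have :=
        le_ciSup (f := fun k => affinePairing (G k) (y₀, 1)) (Set.finite_range _).bddAbove k
      simp only [A, b, affinePairing_apply, mul_one, one_mul, Sum.elim_inr] at this ⊢
      linarith
  have himp : ∀ q, (∀ i, A i q ≤ b i) → affinePairing (p.1, 1) q ≤ p.2 := by
    rintro ⟨y, u⟩ hyu
    have hy (j : Fin m) : affinePairing (P j) (y, 1) ≤ 0 := by simpa [A, b] using hyu (.inl j)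
    have hu : ⨆ k, affinePairing (G k) (y, 1) ≤ u := ciSup_le fun k => by
      have := hyu (.inr k)
      simp only [A, b, affinePairing_apply, mul_one, one_mul, Sum.elim_inr] at this ⊢
      linarith
    have := (hp y hy).trans hu
    simp only [affinePairing_apply, mul_one, one_mul] at this ⊢
    linarith
  obtain ⟨μ, hμ, hx, ht⟩ := exists_nonneg_eq_sum_smul_of_forall_le A b _ _ hfeas himp
  refine ⟨μ ∘ .inl, μ ∘ .inr, fun j => hμ _, fun k => hμ _, affinePairing_injective ?_, ?_⟩
  · rw [hx, Fintype.sum_sum_type]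
    simp only [A, map_add, map_sum, map_smul, Sum.elim_inl, Sum.elim_inr, Function.comp_apply]
  · simpa only [b, Fintype.sum_sum_type, Sum.elim_inl, Sum.elim_inr, Function.comp_apply] using ht

theorem forall_affinePairing_le_iSup_iff {m : ℕ} {κ : Type*} [Fintype κ] [Nonempty κ]
    (P : Fin m → (σ → ℝ) × ℝ) (G : κ → (σ → ℝ) × ℝ)
    (hQ : ∃ y, ∀ j, affinePairing (P j) (y, 1) ≤ 0) (p : (σ → ℝ) × ℝ) :
    (∀ y, (∀ j, affinePairing (P j) (y, 1) ≤ 0) →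
        affinePairing p (y, 1) ≤ ⨆ k, affinePairing (G k) (y, 1)) ↔
      p ∈ convexHull ℝ (Set.range G) + {z | ∃ c : Fin (m + 1) → ℝ, (∀ i, 0 ≤ c i) ∧
        z = ∑ i, c i • Fin.snoc (α := fun _ => (σ → ℝ) × ℝ) P (0, 1) i} := by
  refine ⟨fun hp => ?_, fun hp y hy => ?_⟩
  · obtain ⟨ν, μ, hν, hμ, hx, ht⟩ := exists_nonneg_of_forall_affinePairing_le_iSup P G hQ hp
    obtain ⟨hx₁, hsum⟩ := Prod.ext_iff.1 hx
    simp only [Prod.fst_add, Prod.snd_add, Prod.fst_sum, Prod.snd_sum, Prod.smul_fst,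
      Prod.smul_snd, smul_eq_mul, mul_zero, Finset.sum_const_zero, zero_add, mul_one] at hx₁ hsum
    set ρ := p.2 - (∑ j, ν j * (P j).2 + ∑ k, μ k * (G k).2) with hρ
    refine ⟨∑ k, μ k • G k, ?_, ∑ j, ν j • P j + ρ • (0, 1), ⟨Fin.snoc ν ρ, fun i => ?_, ?_⟩, ?_⟩
    · exact (convex_convexHull ℝ _).sum_mem (fun k _ => hμ k) hsum.symm
        fun k _ => subset_convexHull ℝ _ ⟨k, rfl⟩
    · refine Fin.lastCases ?_ (fun j => ?_) i
      · simp only [Fin.snoc_last]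
        linarith
      · simpa using hν j
    · simp [Fin.sum_univ_castSucc]
    · ext
      · simp [hx₁, Prod.fst_sum, add_comm]
      · simp only [Prod.snd_add, Prod.snd_sum, Prod.smul_snd, smul_eq_mul, mul_one, hρ]
        ring
  · have hG (k : κ) : affinePairing.flip (y, 1) (G k) ≤ ⨆ k, affinePairing (G k) (y, 1) :=
      le_ciSup (f := fun k => affinePairing (G k) (y, 1)) (Set.finite_range _).bddAbove k
    have hV (i : Fin (m + 1)) :
        affinePairing.flip (y, 1) (Fin.snoc (α := fun _ => (σ → ℝ) × ℝ) P (0, 1) i) ≤ 0 := by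
      refine Fin.lastCases ?_ (fun j => ?_) i
      · simp
      · simpa using hy j
    exact apply_le_of_mem_convexHull_add_cone _ hG hV hp

end AffinePairing

theorem bddAbove_and_csSup_le_iff {α : Type*} [ConditionallyCompleteLattice α] {S : Set α}
    (hS : S.Nonempty) {a : α} : BddAbove S ∧ sSup S ≤ a ↔ ∀ b ∈ S, b ≤ a :=
  ⟨fun ⟨hb, ha⟩ => (csSup_le_iff hb hS).1 ha, fun ha => ⟨⟨a, ha⟩, csSup_le hS ha⟩⟩

theorem epigraph_conjugate_ratVPolyhedron_general (n : ℕ)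
    (Q : Set (Fin n → ℝ)) (hQne : Q.Nonempty)
    (hQpoly : IsRatHPolyhedron n Q)
    (N : ℕ) (hN : 0 < N) (s : Fin N → Fin n → ℚ) (a : Fin N → ℚ)
    (g : (Fin n → ℝ) → ℝ)
    (hg : ∀ x ∈ Q, g x = ⨆ k : Fin N, ((∑ i, (s k i : ℝ) * x i) + (a k : ℝ)))
    (D : Set (Fin n → ℝ))
    (hD : D = {x : Fin n → ℝ | BddAbove ((fun y => (∑ i, x i * y i) - g y) '' Q)})
    (h : (Fin n → ℝ) → ℝ)
    (hh : ∀ x ∈ D, h x = sSup ((fun y => (∑ i, x i * y i) - g y) '' Q)) :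
    ∃ (M K : ℕ) (Y : Fin M → (Fin n → ℚ) × ℚ) (V : Fin K → (Fin n → ℚ) × ℚ),
      {p : (Fin n → ℝ) × ℝ | p.1 ∈ D ∧ h p.1 ≤ p.2} =
        convexHull ℝ (Set.range fun m => ratToReal (Y m)) +
        {z : (Fin n → ℝ) × ℝ | ∃ c : Fin K → ℝ,
          (∀ k, 0 ≤ c k) ∧ z = ∑ k : Fin K, c k • ratToReal (V k)} := by
  obtain ⟨m, α, β, hQ⟩ := hQpoly
  subst hD
  have : Nonempty (Fin N) := ⟨⟨0, hN⟩⟩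
  let P (j : Fin m) : (Fin n → ℝ) × ℝ := ratToReal (α j, β j)
  let G (k : Fin N) : (Fin n → ℝ) × ℝ := ratToReal (s k, -a k)
  have hmemQ (y : Fin n → ℝ) : y ∈ Q ↔ ∀ j, affinePairing (P j) (y, 1) ≤ 0 := by
    simp [hQ, P, ratToReal, dotProduct]
  have hgQ (y : Fin n → ℝ) (hy : y ∈ Q) : g y = ⨆ k, affinePairing (G k) (y, 1) := by
    simp [hg y hy, G, ratToReal, dotProduct]
  have hV (k : Fin (m + 1)) : ratToReal (Fin.snoc (α := fun _ => (Fin n → ℚ) × ℚ)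
      (fun j => (α j, β j)) (0, 1) k) = Fin.snoc (α := fun _ => (Fin n → ℝ) × ℝ) P (0, 1) k := by
    refine Fin.lastCases ?_ (fun j => ?_) k <;> simp [P, ratToReal, Pi.zero_def]
  refine ⟨N, m + 1, fun k => (s k, -a k), Fin.snoc (fun j => (α j, β j)) (0, 1), ?_⟩
  ext ⟨x, t⟩
  simp only [hV]
  refine Iff.trans ?_ (forall_affinePairing_le_iSup_iff P G (hQne.imp fun y => (hmemQ y).1) (x, t))
  change BddAbove _ ∧ h x ≤ t ↔ _
  rw [and_congr_right fun hx => by rw [hh x hx], bddAbove_and_csSup_le_iff (hQne.image _),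
    Set.forall_mem_image]
  refine forall_congr' fun y => ?_
  rw [hmemQ]
  refine imp_congr_right fun hy => ?_
  rw [← hgQ y ((hmemQ y).2 hy)]
  simp only [affinePairing_apply, dotProduct, mul_one]
  exact sub_le_comm

/-- Let `Q ⊆ ℝⁿ_{≤0}` be a nonempty rational H-polyhedron with
`Q + ℝⁿ_{≤0} ⊆ Q`, and let `g(x) = max_k (⟨s_k,x⟩ + a_k)` on `Q` with rational
nonnegative slopes `s_k` and rational constants `a_k`, increasing in each variable
on `Q`. Then the epigraph of the convex conjugate
`h(x) = sup_{y ∈ Q} (⟨x,y⟩ − g(y))` (over its finiteness domain `D`) is a rational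
V-polyhedron: `convexHull(Y) + cone(V)` for finite rational sets `Y`, `V`. -/
theorem epigraph_conjugate_ratVPolyhedron (n : ℕ) (hn : 0 < n)
    (Q : Set (Fin n → ℝ)) (hQne : Q.Nonempty)
    (hQsub : Q ⊆ {x : Fin n → ℝ | ∀ i, x i ≤ 0})
    (hQpoly : IsRatHPolyhedron n Q)
    (hQrec : Q + {q : Fin n → ℝ | ∀ i, q i ≤ 0} ⊆ Q)
    (N : ℕ) (hN : 0 < N) (s : Fin N → Fin n → ℚ) (a : Fin N → ℚ)
    (hs : ∀ k i, 0 ≤ s k i)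
    (g : (Fin n → ℝ) → ℝ)
    (hg : ∀ x ∈ Q, g x = ⨆ k : Fin N, ((∑ i, (s k i : ℝ) * x i) + (a k : ℝ)))
    (hmono : ∀ x ∈ Q, ∀ y ∈ Q, (∀ i, x i ≤ y i) → g x ≤ g y)
    (D : Set (Fin n → ℝ))
    (hD : D = {x : Fin n → ℝ | BddAbove ((fun y => (∑ i, x i * y i) - g y) '' Q)})
    (h : (Fin n → ℝ) → ℝ)
    (hh : ∀ x ∈ D, h x = sSup ((fun y => (∑ i, x i * y i) - g y) '' Q)) :
    ∃ (M K : ℕ) (Y : Fin M → (Fin n → ℚ) × ℚ) (V : Fin K → (Fin n → ℚ) × ℚ),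
      {p : (Fin n → ℝ) × ℝ | p.1 ∈ D ∧ h p.1 ≤ p.2} =
        convexHull ℝ (Set.range fun m => ratToReal (Y m)) +
        {z : (Fin n → ℝ) × ℝ | ∃ c : Fin K → ℝ,
          (∀ k, 0 ≤ c k) ∧ z = ∑ k : Fin K, c k • ratToReal (V k)} :=
  epigraph_conjugate_ratVPolyhedron_general n Q hQne hQpoly N hN s a g hg D hD h hh
end

section
/- Let n, r be positive integers, let c > 0 be a real number, and let b₁, …, b_r ∈ ℝⁿ each have all components nonnegative. Define g on ℝⁿ_{<0} = {y ∈ ℝⁿ : ∀i, yᵢ < 0} by g(y) = c · max_{1≤i≤r} ⟨bᵢ,y⟩. Then the Newton convex body of g equals c • (convexHull{b₁,…,b_r}) + ℝⁿ_{≥0}; that is, {x ∈ ℝⁿ : the set {⟨x,y⟩ − g(y) : y ∈ ℝⁿ_{<0}} is bounded above} = {c·p + q : p ∈ convexHull ℝ {b₁,…,b_r}, q ∈ ℝⁿ, ∀i, qᵢ ≥ 0}. -/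
/-! For fixed `x`, the function `ψ y = x ⬝ᵥ y - c * max_k (b k ⬝ᵥ y)` is positively homogeneous,
so it is bounded above on the open negative orthant iff it is nonpositive there, and, being
continuous, iff it is nonpositive on the closed negative orthant. The set
`S = c • conv{b_k} + ℝⁿ_{≥0}` is closed and convex, and it recedes along every nonnegative
direction, so every linear functional bounded above on `S` is `· ⬝ᵥ y` with `y ≤ 0`. Hahn–Banach
then shows that `x ∈ S` iff `x ⬝ᵥ y ≤ c * max_k (b k ⬝ᵥ y)` for all `y ≤ 0`. -/

open Set Pointwise

theorem bddAbove_image_iff_forall_nonpos {E : Type*} [SMul ℝ E] {φ : E → ℝ} {C : Set E}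
    (hC : ∀ t : ℝ, 0 < t → ∀ y ∈ C, t • y ∈ C) (hφ : ∀ t : ℝ, 0 < t → ∀ y, φ (t • y) = t * φ y) :
    BddAbove (φ '' C) ↔ ∀ y ∈ C, φ y ≤ 0 := by
  refine ⟨fun ⟨M, hM⟩ y hy => ?_, fun h => ⟨0, forall_mem_image.2 h⟩⟩
  by_contra! hpos
  have hM0 : φ y ≤ M := hM (mem_image_of_mem φ hy)
  set t := (M + 1) / φ y
  have ht : 0 < t := div_pos (by linarith) hpos
  have : φ (t • y) ≤ M := hM (mem_image_of_mem φ (hC t ht y hy))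
  rw [hφ t ht, div_mul_cancel₀ _ hpos.ne'] at this
  linarith

theorem closure_setOf_forall_neg {σ : Type*} [Finite σ] :
    closure {y : σ → ℝ | ∀ i, y i < 0} = Iic 0 := by
  have : {y : σ → ℝ | ∀ i, y i < 0} = univ.pi fun _ => Iio 0 := by ext; simp
  rw [this, closure_pi_set, closure_Iio]
  ext; simp [Pi.le_def]

theorem isClosed_smul_convexHull_add_Ici {ι σ : Type*} [Finite ι] (b : ι → σ → ℝ) (c : ℝ) :
    IsClosed (c • convexHull ℝ (range b) + Ici 0) :=
  isClosed_Ici.add_left_of_isCompact (((finite_range b).isCompact_convexHull ℝ).smul c)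

theorem exists_dotProduct_lt_of_notMem {σ : Type*} [Fintype σ] {S : Set (σ → ℝ)}
    (hconv : Convex ℝ S) (hclosed : IsClosed S) {x : σ → ℝ} (hx : x ∉ S) :
    ∃ y : σ → ℝ, ∃ u : ℝ, (∀ z ∈ S, z ⬝ᵥ y < u) ∧ u < x ⬝ᵥ y := by
  classical
  obtain ⟨f, u, hfS, hfx⟩ := geometric_hahn_banach_closed_point hconv hclosed hx
  set y := (dotProductEquiv ℝ σ).symm f.toLinearMap
  have hf : ∀ z, f z = z ⬝ᵥ y := fun z => by
    rw [dotProduct_comm]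
    exact (LinearMap.congr_fun ((dotProductEquiv ℝ σ).apply_symm_apply f.toLinearMap) z).symm
  exact ⟨y, u, fun z hz => hf z ▸ hfS z hz, hf x ▸ hfx⟩

section SupportFunction

variable {ι σ : Type*} [Fintype σ] (b : ι → σ → ℝ)

-- For empty `ι` this is the junk value `⨆ ∅ = 0`.
noncomputable def supportFunction (y : σ → ℝ) : ℝ := ⨆ k, b k ⬝ᵥ y

theorem dotProduct_le_supportFunction [Finite ι] {p : σ → ℝ} (hp : p ∈ convexHull ℝ (range b))
    (y : σ → ℝ) : p ⬝ᵥ y ≤ supportFunction b y := by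
  have hlin : IsLinearMap ℝ fun z : σ → ℝ => z ⬝ᵥ y :=
    ⟨fun _ _ => add_dotProduct .., fun _ _ => smul_dotProduct ..⟩
  refine convexHull_min ?_ (convex_halfSpace_le hlin _) hp
  rintro _ ⟨k, rfl⟩
  exact le_ciSup (finite_range fun k => b k ⬝ᵥ y).bddAbove k

theorem supportFunction_smul {t : ℝ} (ht : 0 ≤ t) (y : σ → ℝ) :
    supportFunction b (t • y) = t * supportFunction b y := by
  simp only [supportFunction, dotProduct_smul, smul_eq_mul, Real.mul_iSup_of_nonneg ht]

theorem continuous_supportFunction [Fintype ι] [Nonempty ι] : Continuous (supportFunction b) := by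
  have : supportFunction b = fun y => Finset.univ.sup' Finset.univ_nonempty (b · ⬝ᵥ y) := by
    ext y; exact (Finset.sup'_univ_eq_ciSup _).symm
  rw [this]
  exact Continuous.finset_sup'_apply _ fun k _ => continuous_const.dotProduct continuous_id

theorem mem_smul_convexHull_add_Ici_iff [Finite ι] [Nonempty ι] {c : ℝ} (hc : 0 ≤ c)
    (x : σ → ℝ) :
    x ∈ c • convexHull ℝ (range b) + Ici 0 ↔ ∀ y ≤ 0, x ⬝ᵥ y ≤ c * supportFunction b y := by
  constructor
  · rintro ⟨_, ⟨p, hp, rfl⟩, q, hq, rfl⟩ y hy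
    have hqy : q ⬝ᵥ y ≤ 0 :=
      Finset.sum_nonpos fun i _ => mul_nonpos_of_nonneg_of_nonpos (hq i) (hy i)
    rw [add_dotProduct, smul_dotProduct, smul_eq_mul]
    nlinarith [dotProduct_le_supportFunction b hp y]
  · intro hx
    by_contra hxS
    have hconv : Convex ℝ (c • convexHull ℝ (range b) + Ici 0) :=
      ((convex_convexHull ℝ _).smul c).add (convex_Ici 0)
    obtain ⟨y, u, hS, hux⟩ :=
      exists_dotProduct_lt_of_notMem hconv (isClosed_smul_convexHull_add_Ici b c) hxS
    have hb : ∀ k, c • b k ∈ c • convexHull ℝ (range b) :=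
      fun k => smul_mem_smul_set (subset_convexHull ℝ _ (mem_range_self k))
    obtain ⟨k₀⟩ := ‹Nonempty ι›
    -- `S` recedes along the cone `Ici 0`, so `· ⬝ᵥ y` is bounded above on that cone.
    have hyq : ∀ q ∈ Ici (0 : σ → ℝ), q ⬝ᵥ y ≤ 0 := by
      refine (bddAbove_image_iff_forall_nonpos (fun t ht q hq => smul_nonneg ht.le hq)
        (fun t _ q => smul_dotProduct t q y)).1 ⟨u - c • b k₀ ⬝ᵥ y, ?_⟩
      rintro _ ⟨q, hq, rfl⟩
      have := hS _ (add_mem_add (hb k₀) hq)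
      rw [add_dotProduct] at this
      linarith
    have hy : y ≤ 0 := fun i => by
      classical
      simpa [single_one_dotProduct] using hyq (Pi.single i 1) (Pi.single_nonneg.2 zero_le_one)
    have hcu : c * supportFunction b y ≤ u := by
      rw [supportFunction, Real.mul_iSup_of_nonneg hc]
      refine ciSup_le fun k => ?_
      have := hS _ (add_mem_add (hb k) (mem_Ici.2 le_rfl))
      rw [add_zero, smul_dotProduct, smul_eq_mul] at this
      exact this.le
    linarith [hx y hy]

end SupportFunction

theorem newton_body_of_max_linear_general (n r : ℕ) (hr : 0 < r)
    (c : ℝ) (hc : 0 < c) (b : Fin r → Fin n → ℝ) :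
    {x : Fin n → ℝ |
        BddAbove ((fun y => (∑ i, x i * y i) - c * ⨆ k : Fin r, ∑ i, b k i * y i) ''
          {y : Fin n → ℝ | ∀ i, y i < 0})} =
    {x : Fin n → ℝ | ∃ p ∈ convexHull ℝ (Set.range b), ∃ q : Fin n → ℝ,
        (∀ i, 0 ≤ q i) ∧ x = c • p + q} := by
  have : Nonempty (Fin r) := ⟨⟨0, hr⟩⟩
  have hRHS : {x : Fin n → ℝ | ∃ p ∈ convexHull ℝ (range b), ∃ q : Fin n → ℝ,
      (∀ i, 0 ≤ q i) ∧ x = c • p + q} = c • convexHull ℝ (range b) + Ici 0 := by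
    ext; simp [mem_add, mem_smul_set, Pi.le_def, eq_comm]
  have hcone : ∀ t : ℝ, 0 < t → ∀ y ∈ {y : Fin n → ℝ | ∀ i, y i < 0}, t • y ∈ {y | ∀ i, y i < 0} :=
    fun t ht y hy i => mul_neg_of_pos_of_neg ht (hy i)
  ext x
  set ψ := fun y => x ⬝ᵥ y - c * supportFunction b y
  have hψ_smul : ∀ t : ℝ, 0 < t → ∀ y, ψ (t • y) = t * ψ y := fun t ht y => by
    simp only [ψ, dotProduct_smul, smul_eq_mul, supportFunction_smul b ht.le]
    ring
  have hψ_cont : Continuous ψ :=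
    (continuous_const.dotProduct continuous_id).sub
      (continuous_const.mul (continuous_supportFunction b))
  change BddAbove (ψ '' _) ↔ _
  rw [hRHS, bddAbove_image_iff_forall_nonpos hcone hψ_smul,
    mem_smul_convexHull_add_Ici_iff b hc.le]
  refine ⟨fun h y hy => sub_nonpos.1 ?_, fun h y hy => sub_nonpos.2 (h y fun i => (hy i).le)⟩
  have hy' : y ∈ closure {y : Fin n → ℝ | ∀ i, y i < 0} := by rwa [closure_setOf_forall_neg]
  exact (isClosed_le hψ_cont continuous_const).closure_subset_iff.2 h hy'

/-- For `c > 0` and `b₁, …, b_r ∈ ℝⁿ_{≥0}`, the Newton convex body of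
`g(y) = c · max_k ⟨b_k, y⟩` on `ℝⁿ_{<0}` equals
`c • convexHull{b₁,…,b_r} + ℝⁿ_{≥0}`. -/
theorem newton_body_of_max_linear (n r : ℕ) (hn : 0 < n) (hr : 0 < r)
    (c : ℝ) (hc : 0 < c) (b : Fin r → Fin n → ℝ) (hb : ∀ k i, 0 ≤ b k i) :
    {x : Fin n → ℝ |
        BddAbove ((fun y => (∑ i, x i * y i) - c * ⨆ k : Fin r, ∑ i, b k i * y i) ''
          {y : Fin n → ℝ | ∀ i, y i < 0})} =
    {x : Fin n → ℝ | ∃ p ∈ convexHull ℝ (Set.range b), ∃ q : Fin n → ℝ,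
        (∀ i, 0 ≤ q i) ∧ x = c • p + q} :=
  newton_body_of_max_linear_general n r hr c hc b
end

section
/- Let n be a positive integer and let g : ℝⁿ → ℝ be convex on ℝⁿ_{<0} = {y ∈ ℝⁿ : ∀i, yᵢ < 0} and increasing in each variable there (if y, y' ∈ ℝⁿ_{<0} with yᵢ ≤ y'ᵢ for all i, then g(y) ≤ g(y')). Then for every real r > 0 and every x ∈ ℝⁿ, the set {⟨x,y⟩ − g(y) : y ∈ ℝⁿ_{<0}} is bounded above if and only if the set {⟨x,y⟩ − g(y) : y ∈ (−∞,−r)ⁿ} is bounded above. In other words, the Newton convex body of g is unchanged when the domain ℝⁿ_{<0} is shrunk to (−∞,−r)ⁿ for any r > 0. -/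
open Set

theorem BddAbove.image_of_mapsTo_le_add {α : Type*} {f : α → ℝ} {s t : Set α} (σ : α → α)
    (hσ : MapsTo σ s t) (C : ℝ) (hf : ∀ y ∈ s, f y ≤ f (σ y) + C) (ht : BddAbove (f '' t)) :
    BddAbove (f '' s) := by
  obtain ⟨M, hM⟩ := ht
  refine ⟨M + C, ?_⟩
  rintro _ ⟨y, hy, rfl⟩
  have hσy : f (σ y) ≤ M := hM (mem_image_of_mem f (hσ hy))
  linarith [hf y hy]

theorem sum_mul_sub_const {ι : Type*} [Fintype ι] (x y : ι → ℝ) (r : ℝ) :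
    ∑ i, x i * y i = ∑ i, x i * (y i - r) + r * ∑ i, x i := by
  simp only [mul_sub, Finset.sum_sub_distrib, ← Finset.sum_mul]
  ring

theorem newton_body_shrink_domain_general (n : ℕ)
    (g : (Fin n → ℝ) → ℝ)
    (hmono : ∀ y ∈ {y : Fin n → ℝ | ∀ i, y i < 0},
      ∀ y' ∈ {y : Fin n → ℝ | ∀ i, y i < 0}, (∀ i, y i ≤ y' i) → g y ≤ g y')
    (r : ℝ) (hr : 0 < r) (x : Fin n → ℝ) :
    BddAbove ((fun y => (∑ i, x i * y i) - g y) '' {y : Fin n → ℝ | ∀ i, y i < 0}) ↔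
    BddAbove ((fun y => (∑ i, x i * y i) - g y) '' {y : Fin n → ℝ | ∀ i, y i < -r}) := by
  have hshrink : {y : Fin n → ℝ | ∀ i, y i < -r} ⊆ {y | ∀ i, y i < 0} :=
    fun y hy i => (hy i).trans (neg_lt_zero.mpr hr)
  refine ⟨fun h => h.mono (image_mono hshrink), ?_⟩
  -- Shifting `y` by `-r` in every coordinate lands in `(−∞,−r)ⁿ` and, by monotonicity,
  -- does not raise `g`, so the objective at `y` exceeds its value there by at most `r * ∑ i, x i`.
  refine BddAbove.image_of_mapsTo_le_add (fun y i => y i - r) (fun y hy i => by linarith [hy i])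
    (r * ∑ i, x i) fun y hy => ?_
  have hg : g (fun i => y i - r) ≤ g y :=
    hmono _ (hshrink fun i => by linarith [hy i]) y hy fun i => by linarith
  rw [sum_mul_sub_const x y r]
  linarith

/-- For `g` convex and increasing in each variable on
`ℝⁿ_{<0} = {y : ∀ i, y i < 0}`, and any `r > 0`, the set
`{⟨x,y⟩ − g(y) : y ∈ ℝⁿ_{<0}}` is bounded above iff
`{⟨x,y⟩ − g(y) : y ∈ (−∞,−r)ⁿ}` is bounded above; i.e. the Newton convex body is
unchanged under shrinking the domain. -/
theorem newton_body_shrink_domain (n : ℕ) (hn : 0 < n)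
    (g : (Fin n → ℝ) → ℝ)
    (hconv : ConvexOn ℝ {y : Fin n → ℝ | ∀ i, y i < 0} g)
    (hmono : ∀ y ∈ {y : Fin n → ℝ | ∀ i, y i < 0},
      ∀ y' ∈ {y : Fin n → ℝ | ∀ i, y i < 0}, (∀ i, y i ≤ y' i) → g y ≤ g y')
    (r : ℝ) (hr : 0 < r) (x : Fin n → ℝ) :
    BddAbove ((fun y => (∑ i, x i * y i) - g y) '' {y : Fin n → ℝ | ∀ i, y i < 0}) ↔
    BddAbove ((fun y => (∑ i, x i * y i) - g y) '' {y : Fin n → ℝ | ∀ i, y i < -r}) :=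
  newton_body_shrink_domain_general n g hmono r hr x
end
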